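/- The linear map Φ : ⨁_{n∈ℕ} Hom_G(Vₙ, ℂ[SL(2,ℂ)]_right) ⊗ Vₙ → ℂ[SL(2,ℂ)] determined on each summand by γ ⊗ v ↦ γ(v) is a linear bijection, where Hom_G(Vₙ, ℂ[SL(2,ℂ)]_right) denotes the space of all ℂ-linear maps γ : Vₙ → ℂ[SL(2,ℂ)] satisfying γ(ρₙ(g)v)(x) = γ(v)(xg) for all g, x ∈ SL(2,ℂ) and v ∈ Vₙ. -/

import Mathlib

open Matrix Finset TensorProduct DirectSum

noncomputable section

abbrev SL2 : Type := Matrix.SpecialLinearGroup (Fin 2) ℂ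

/-- A function `f : SL(2,ℂ) → ℂ` is regular if it is given by a polynomial
in the four matrix entries. -/
def IsRegularFn (f : SL2 → ℂ) : Prop :=
  ∃ P : MvPolynomial (Fin 4) ℂ,
    ∀ A : SL2, f A = MvPolynomial.eval ![A.1 0 0, A.1 0 1, A.1 1 0, A.1 1 1] P

/-- Matrix entry of the representation ρₙ on Vₙ in the basis `n_k = X^k Y^{n-k}`:
`rhoFun n g l k` is the coefficient of `X^l Y^{n-l}` in
`(g₁₁ X + g₂₁ Y)^k (g₁₂ X + g₂₂ Y)^{n-k}`. -/
def rhoFun (n : ℕ) (g : SL2) (l k : ℕ) : ℂ :=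
  MvPolynomial.coeff (Finsupp.single (0 : Fin 2) l + Finsupp.single (1 : Fin 2) (n - l))
    (MvPolynomial.aeval
      ![MvPolynomial.C (g.1 0 0) * MvPolynomial.X (0 : Fin 2) +
          MvPolynomial.C (g.1 1 0) * MvPolynomial.X 1,
        MvPolynomial.C (g.1 0 1) * MvPolynomial.X 0 +
          MvPolynomial.C (g.1 1 1) * MvPolynomial.X 1]
      ((MvPolynomial.X (0 : Fin 2) : MvPolynomial (Fin 2) ℂ) ^ k * MvPolynomial.X 1 ^ (n - k)))

/-- The matrix of ρₙ(g) acting on coordinates with respect to the basis `n_k`. -/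
def rhoMat (n : ℕ) (g : SL2) : Matrix (Fin (n+1)) (Fin (n+1)) ℂ :=
  Matrix.of fun l k => rhoFun n g (l : ℕ) (k : ℕ)

/-- `Hom_G(Vₙ, ℂ[SL(2,ℂ)]_right)`: the space of linear maps `γ : Vₙ → ℂ[SL(2,ℂ)]`
satisfying `γ(ρₙ(g)v)(x) = γ(v)(xg)`. -/
def HomG (n : ℕ) : Submodule ℂ ((Fin (n+1) → ℂ) →ₗ[ℂ] (SL2 → ℂ)) where
  carrier := {γ | (∀ v, IsRegularFn (γ v)) ∧
    ∀ (g : SL2) (v : Fin (n+1) → ℂ) (x : SL2), γ ((rhoMat n g).mulVec v) x = γ v (x * g)}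
  add_mem' := by
    rintro γ₁ γ₂ ⟨hr₁, he₁⟩ ⟨hr₂, he₂⟩
    refine ⟨fun v => ?_, fun g v x => by simp [he₁ g v x, he₂ g v x]⟩
    obtain ⟨P, hP⟩ := hr₁ v
    obtain ⟨Q, hQ⟩ := hr₂ v
    exact ⟨P + Q, fun A => by simp [hP A, hQ A]⟩
  zero_mem' := ⟨fun v => ⟨0, fun A => by simp⟩, fun g v x => by simp⟩
  smul_mem' := by
    rintro c γ ⟨hr, he⟩
    refine ⟨fun v => ?_, fun g v x => by simp [he g v x]⟩
    obtain ⟨P, hP⟩ := hr v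
    exact ⟨c • P, fun A => by simp [hP A, MvPolynomial.smul_eval]⟩

/-- The map `Φ : ⨁ₙ Hom_G(Vₙ, ℂ[SL(2,ℂ)]_right) ⊗ Vₙ → (SL(2,ℂ) → ℂ)` given
on each summand by `γ ⊗ v ↦ γ(v)`. -/
def Phi : (⨁ n : ℕ, (↥(HomG n) ⊗[ℂ] (Fin (n+1) → ℂ))) →ₗ[ℂ] (SL2 → ℂ) :=
  DirectSum.toModule ℂ ℕ (SL2 → ℂ) fun n => TensorProduct.lift (HomG n).subtype

namespace SL2Aux
open MvPolynomial

noncomputable section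

def ea (g : SL2) : ℂ := g.1 0 0
def eb (g : SL2) : ℂ := g.1 0 1
def ec (g : SL2) : ℂ := g.1 1 0
def ed (g : SL2) : ℂ := g.1 1 1

lemma det1 (g : SL2) : ea g * ed g - eb g * ec g = 1 := by
  have h := g.2
  rw [Matrix.det_fin_two] at h
  exact h

/-- the exponent vector of `X^l Y^(n-l)` -/
def mu (n l : ℕ) : Fin 2 →₀ ℕ := Finsupp.single 0 l + Finsupp.single 1 (n - l)

lemma fin2_single_eq_iff (x y u v : ℕ) :
    (Finsupp.single (0 : Fin 2) x + Finsupp.single 1 y =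
      Finsupp.single 0 u + Finsupp.single 1 v) ↔ x = u ∧ y = v := by
  constructor
  · intro h
    constructor
    · have h0 := DFunLike.congr_fun h 0
      simpa using h0
    · have h1 := DFunLike.congr_fun h 1
      simpa using h1
  · rintro ⟨rfl, rfl⟩; rfl

/-- closed form for the matrix coefficients -/
def cf (n l k : ℕ) (g : SL2) : ℂ :=
  ∑ p ∈ Finset.range (n+1),
    if p ≤ l ∧ p ≤ k ∧ l - p ≤ n - k then
      (k.choose p : ℂ) * ((n-k).choose (l-p) : ℂ) *
        ea g ^ p * eb g ^ (l-p) * ec g ^ (k-p) * ed g ^ ((n-k)-(l-p))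
    else 0

lemma expand_pow (x y : ℂ) (m : ℕ) :
    ((C x * X 0 + C y * X 1 : MvPolynomial (Fin 2) ℂ)) ^ m =
      ∑ p ∈ Finset.range (m+1),
        monomial (Finsupp.single 0 p + Finsupp.single 1 (m - p))
          (x ^ p * y ^ (m - p) * (m.choose p : ℂ)) := by
  rw [add_pow]
  refine Finset.sum_congr rfl fun p hp => ?_
  rw [mul_pow, mul_pow, ← C_pow, ← C_pow, X_pow_eq_monomial, X_pow_eq_monomial,
    C_mul_monomial, C_mul_monomial, monomial_mul]
  rw [show ((m.choose p : ℕ) : MvPolynomial (Fin 2) ℂ) = C (m.choose p : ℂ) by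
    simp]
  rw [mul_comm _ (C (m.choose p : ℂ)), C_mul_monomial]
  ring_nf

lemma sum_extend (f : ℕ → ℂ) (k n : ℕ) (h : k ≤ n) (hz : ∀ p, k < p → f p = 0) :
    ∑ p ∈ Finset.range (k+1), f p = ∑ p ∈ Finset.range (n+1), f p :=
  Finset.sum_subset (Finset.range_subset_range.2 (by omega))
    (fun p hp hnp => hz p (by simp only [Finset.mem_range] at hp hnp; omega))

lemma rhoFun_eq (n l k : ℕ) (hl : l ≤ n) (hk : k ≤ n) (g : SL2) :
    rhoFun n g l k = cf n l k g := by
  unfold rhoFun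
  rw [_root_.map_mul, map_pow, map_pow, aeval_X, aeval_X]
  simp only [Matrix.cons_val_zero, Matrix.cons_val_one, Matrix.head_cons]
  rw [expand_pow, expand_pow, Finset.sum_mul_sum]
  simp only [monomial_mul, MvPolynomial.coeff_sum, MvPolynomial.coeff_monomial]
  have step1 : ∀ p q : ℕ, (Finsupp.single (0:Fin 2) p + Finsupp.single 1 (k-p) +
      (Finsupp.single 0 q + Finsupp.single 1 ((n-k)-q)))
      = Finsupp.single 0 (p+q) + Finsupp.single 1 ((k-p) + ((n-k)-q)) := by
    intro p q
    rw [Finsupp.single_add, Finsupp.single_add]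
    abel
  simp only [step1, fin2_single_eq_iff]
  rw [sum_extend _ k n hk (fun p hp => Finset.sum_eq_zero fun q hq => by
    simp [Nat.choose_eq_zero_of_lt hp])]
  unfold cf
  refine Finset.sum_congr rfl fun p hp => ?_
  rw [Finset.mem_range] at hp
  by_cases hc : p ≤ l ∧ p ≤ k ∧ l - p ≤ n - k
  · rw [if_pos hc]
    rw [Finset.sum_eq_single (l - p)]
    · rw [if_pos ⟨by omega, by omega⟩]
      simp only [ea, eb, ec, ed]; ring
    · intro q hq hne
      rw [Finset.mem_range] at hq
      refine if_neg fun hcc => hne (by omega)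
    · intro habs
      exact absurd (Finset.mem_range.2 (by omega)) habs
  · rw [if_neg hc]
    refine Finset.sum_eq_zero fun q hq => ?_
    rw [Finset.mem_range] at hq
    by_cases hpk : p ≤ k
    · refine if_neg fun hcc => hc ⟨by omega, hpk, by omega⟩
    · simp [Nat.choose_eq_zero_of_lt (by omega : k < p)]
/-- exponent vector in 4 variables -/
def E4 (p q r s : ℕ) : Fin 4 →₀ ℕ :=
  Finsupp.single 0 p + Finsupp.single 1 q + Finsupp.single 2 r + Finsupp.single 3 s

lemma eval_monomial_E4 (v : Fin 4 → ℂ) (p q r s : ℕ) (α : ℂ) :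
    eval v (monomial (E4 p q r s) α) = α * v 0 ^ p * v 1 ^ q * v 2 ^ r * v 3 ^ s := by
  rw [eval_monomial, E4]
  rw [Finsupp.prod_add_index' (fun a => pow_zero _) (fun a b c => pow_add _ _ _)]
  rw [Finsupp.prod_add_index' (fun a => pow_zero _) (fun a b c => pow_add _ _ _)]
  rw [Finsupp.prod_add_index' (fun a => pow_zero _) (fun a b c => pow_add _ _ _)]
  have hs : ∀ (i : Fin 4) (e : ℕ),
      ((Finsupp.single i e).prod fun a => HPow.hPow (v a)) = v i ^ e := fun i e =>
    Finsupp.prod_single_index (pow_zero _)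
  rw [hs, hs, hs, hs]
  ring

/-- the polynomial giving the matrix coefficient function -/
def CP (n l k : ℕ) : MvPolynomial (Fin 4) ℂ :=
  ∑ p ∈ Finset.range (n+1),
    if p ≤ l ∧ p ≤ k ∧ l - p ≤ n - k then
      monomial (E4 p (l-p) (k-p) ((n-k)-(l-p)))
        ((k.choose p : ℂ) * ((n-k).choose (l-p) : ℂ))
    else 0

lemma eval_CP (n l k : ℕ) (g : SL2) :
    eval ![ea g, eb g, ec g, ed g] (CP n l k) = cf n l k g := by
  rw [CP, map_sum, cf]
  refine Finset.sum_congr rfl fun p hp => ?_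
  split_ifs with h
  · rw [eval_monomial_E4]
    simp only [Matrix.cons_val_zero, Matrix.cons_val_one, Matrix.head_cons]
    ring_nf
    rfl
  · simp

def Reg : Submodule ℂ (SL2 → ℂ) where
  carrier := {f | IsRegularFn f}
  add_mem' := by
    rintro f₁ f₂ ⟨P, hP⟩ ⟨Q, hQ⟩
    exact ⟨P + Q, fun A => by simp [hP A, hQ A]⟩
  zero_mem' := ⟨0, fun A => by simp⟩
  smul_mem' := by
    rintro c f ⟨P, hP⟩
    exact ⟨c • P, fun A => by simp [hP A, MvPolynomial.smul_eval]⟩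

def S : Submodule ℂ (SL2 → ℂ) :=
  Submodule.span ℂ {f : SL2 → ℂ | ∃ n l k : ℕ, l ≤ n ∧ k ≤ n ∧ f = fun x => cf n l k x}

lemma cf_mem_S {n l k : ℕ} (hl : l ≤ n) (hk : k ≤ n) :
    (fun x => cf n l k x) ∈ S :=
  Submodule.subset_span ⟨n, l, k, hl, hk, rfl⟩

lemma S_le_Reg : S ≤ Reg := by
  rw [S, Submodule.span_le]
  rintro f ⟨n, l, k, hl, hk, rfl⟩
  exact ⟨CP n l k, fun A => (eval_CP n l k A).symm⟩

def mfun (p q r s : ℕ) : SL2 → ℂ := fun g => ea g ^ p * eb g ^ q * ec g ^ r * ed g ^ s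

lemma step_rel (p q r s : ℕ) :
    mfun (p+1) q r (s+1) = mfun p q r s + mfun p (q+1) (r+1) s := by
  funext g
  have key : ea g * ed g = 1 + eb g * ec g := by linear_combination det1 g
  simp only [mfun, Pi.add_apply]
  calc ea g ^ (p+1) * eb g ^ q * ec g ^ r * ed g ^ (s+1)
      = (ea g * ed g) * (ea g ^ p * eb g ^ q * ec g ^ r * ed g ^ s) := by ring
    _ = _ := by rw [key]; ring
lemma mfun_mem : ∀ N p q r s : ℕ, p + q + r + s = N → mfun p q r s ∈ S := by
  intro N
  induction N using Nat.strong_induction_on with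
  | _ N IH =>
  have L1 : ∀ δ p q r s, p + q + r + s + 2*δ = N →
      mfun (p+δ) q r (s+δ) - mfun p (q+δ) (r+δ) s ∈ S := by
    intro δ
    induction δ with
    | zero => intro p q r s h; simpa using Submodule.zero_mem S
    | succ δ ih =>
      intro p q r s h
      have e1 : mfun (p+(δ+1)) q r (s+(δ+1))
          = mfun (p+δ) q r (s+δ) + mfun (p+δ) (q+1) (r+1) (s+δ) := by
        have h2 := step_rel (p+δ) q r (s+δ)
        have e2 : p + (δ+1) = (p+δ)+1 := by ring
        have e3 : s + (δ+1) = (s+δ)+1 := by ring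
        rw [e2, e3, h2]
      have h2 : mfun (p+δ) q r (s+δ) ∈ S := by
        refine IH (N-2) (by omega) _ _ _ _ (by omega)
      have h3 : mfun (p+δ) (q+1) (r+1) (s+δ) - mfun p (q+1+δ) (r+1+δ) s ∈ S :=
        ih p (q+1) (r+1) s (by omega)
      have e4 : mfun (p+(δ+1)) q r (s+(δ+1)) - mfun p (q+(δ+1)) (r+(δ+1)) s
          = mfun (p+δ) q r (s+δ)
            + (mfun (p+δ) (q+1) (r+1) (s+δ) - mfun p (q+1+δ) (r+1+δ) s) := by
        rw [e1]
        have e5 : q + (δ+1) = q+1+δ := by ring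
        have e6 : r + (δ+1) = r+1+δ := by ring
        rw [e5, e6]; abel
      rw [e4]
      exact Submodule.add_mem S h2 h3
  have C1 : ∀ p δ q r s q' r' s', q' + δ = q → r' + δ = r → s' = s + δ →
      p + q + r + s = N → mfun (p+δ) q' r' s' - mfun p q r s ∈ S := by
    intro p δ q r s q' r' s' hq hr hs hN
    subst hs
    rw [← hq, ← hr]
    exact L1 δ p q' r' s (by omega)
  intro p q r s hsum
  set l := p + q with hldef
  set k := p + r with hkdef
  -- each valid family member differs from our target by an element of S
  have diffS : ∀ p' : ℕ, p' ≤ l → p' ≤ k → l - p' ≤ N - k →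
      mfun p' (l-p') (k-p') ((N-k)-(l-p')) - mfun p q r s ∈ S := by
    intro p' h1 h2 h3
    rcases le_or_gt p p' with hle | hlt
    · have := C1 p (p'-p) q r s (l-p') (k-p') ((N-k)-(l-p'))
        (by omega) (by omega) (by omega) (by omega)
      have e : p + (p'-p) = p' := by omega
      rwa [e] at this
    · have hmem := C1 p' (p-p') (l-p') (k-p') ((N-k)-(l-p')) q r s
        (by omega) (by omega) (by omega) (by omega)
      have e : p' + (p-p') = p := by omega
      rw [e] at hmem
      have := Submodule.neg_mem S hmem
      rwa [neg_sub] at this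
  -- the coefficient sum is the full binomial coefficient
  have van : ∑ p' ∈ Finset.range (N+1),
      (if p' ≤ l ∧ p' ≤ k ∧ l - p' ≤ N - k then
        ((k.choose p' : ℂ) * (((N-k).choose (l-p') : ℕ) : ℂ)) else 0)
      = ((N.choose l : ℕ) : ℂ) := by
    rw [← sum_extend _ l N (by omega) (fun p' hp' => by
      rw [if_neg]; omega)]
    have : ∀ p' ∈ Finset.range (l+1),
        (if p' ≤ l ∧ p' ≤ k ∧ l - p' ≤ N - k then
          ((k.choose p' : ℂ) * (((N-k).choose (l-p') : ℕ) : ℂ)) else 0)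
        = ((k.choose p' * (N-k).choose (l-p') : ℕ) : ℂ) := by
      intro p' hp'
      rw [Finset.mem_range] at hp'
      split_ifs with h
      · push_cast; ring
      · rcases Nat.lt_or_ge k p' with hk | hk
        · simp [Nat.choose_eq_zero_of_lt hk]
        · have : N - k < l - p' := by omega
          simp [Nat.choose_eq_zero_of_lt this]
    rw [Finset.sum_congr rfl this, ← Nat.cast_sum]
    congr 1
    have hv := Nat.add_choose_eq k (N-k) l
    rw [show k + (N-k) = N by omega] at hv
    rw [hv, Finset.Nat.sum_antidiagonal_eq_sum_range_succ_mk]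
  -- pointwise decomposition of cf
  have keyfun : (fun x => cf N l k x)
      = (∑ p' ∈ Finset.range (N+1),
          if p' ≤ l ∧ p' ≤ k ∧ l - p' ≤ N - k then
            ((k.choose p' : ℂ) * (((N-k).choose (l-p') : ℕ) : ℂ)) •
              (mfun p' (l-p') (k-p') ((N-k)-(l-p')) - mfun p q r s)
          else 0)
        + ((N.choose l : ℕ) : ℂ) • mfun p q r s := by
    funext x
    rw [Pi.add_apply, Finset.sum_apply, Pi.smul_apply, smul_eq_mul, ← van, Finset.sum_mul, ← Finset.sum_add_distrib, cf]
    refine Finset.sum_congr rfl fun p' hp' => ?_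
    split_ifs with h
    · simp only [Pi.smul_apply, Pi.sub_apply, smul_eq_mul, mfun]
      ring
    · simp
  have hc0 : ((N.choose l : ℕ) : ℂ) ≠ 0 := by
    exact Nat.cast_ne_zero.2 (Nat.choose_pos (by omega)).ne'
  have hsum_mem : (∑ p' ∈ Finset.range (N+1),
      if p' ≤ l ∧ p' ≤ k ∧ l - p' ≤ N - k then
        ((k.choose p' : ℂ) * (((N-k).choose (l-p') : ℕ) : ℂ)) •
          (mfun p' (l-p') (k-p') ((N-k)-(l-p')) - mfun p q r s)
      else 0) ∈ S := by
    refine Submodule.sum_mem S fun p' hp' => ?_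
    split_ifs with h
    · exact Submodule.smul_mem S _ (diffS p' h.1 h.2.1 h.2.2)
    · exact Submodule.zero_mem S
  have : mfun p q r s = (((N.choose l : ℕ) : ℂ))⁻¹ •
      ((fun x => cf N l k x) - (∑ p' ∈ Finset.range (N+1),
        if p' ≤ l ∧ p' ≤ k ∧ l - p' ≤ N - k then
          ((k.choose p' : ℂ) * (((N-k).choose (l-p') : ℕ) : ℂ)) •
            (mfun p' (l-p') (k-p') ((N-k)-(l-p')) - mfun p q r s)
        else 0)) := by
    rw [keyfun]
    rw [add_sub_cancel_left]
    rw [smul_smul, inv_mul_cancel₀ hc0, one_smul]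
  rw [this]
  exact Submodule.smul_mem S _
    (Submodule.sub_mem S (cf_mem_S (by omega) (by omega)) hsum_mem)

lemma Reg_le_S : Reg ≤ S := by
  rintro f ⟨P, hP⟩
  have : f = ∑ u ∈ P.support, MvPolynomial.coeff u P • mfun (u 0) (u 1) (u 2) (u 3) := by
    funext A
    rw [hP A, Finset.sum_apply, MvPolynomial.eval_eq']
    refine Finset.sum_congr rfl fun u hu => ?_
    rw [Fin.prod_univ_four]
    simp only [Pi.smul_apply, smul_eq_mul, mfun, ea, eb, ec, ed,
      Matrix.cons_val_zero, Matrix.cons_val_one, Matrix.head_cons]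
    ring_nf
    rfl
  rw [this]
  exact Submodule.sum_mem S fun u hu =>
    Submodule.smul_mem S _ (mfun_mem (u 0 + u 1 + u 2 + u 3) _ _ _ _ rfl)
def Tg (g : SL2) : MvPolynomial (Fin 2) ℂ →ₐ[ℂ] MvPolynomial (Fin 2) ℂ :=
  aeval ![C (ea g) * X 0 + C (ec g) * X 1, C (eb g) * X 0 + C (ed g) * X 1]

lemma rhoFun_Tg (n l k : ℕ) (g : SL2) :
    rhoFun n g l k = coeff (mu n l) (Tg g (X 0 ^ k * X 1 ^ (n-k))) := rfl

lemma mul_entries (x g : SL2) :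
    ea (x*g) = ea x * ea g + eb x * ec g ∧ eb (x*g) = ea x * eb g + eb x * ed g ∧
    ec (x*g) = ec x * ea g + ed x * ec g ∧ ed (x*g) = ec x * eb g + ed x * ed g := by
  have h : (x*g).1 = x.1 * g.1 := rfl
  refine ⟨?_, ?_, ?_, ?_⟩ <;>
    simp [ea, eb, ec, ed, h, Matrix.mul_apply, Fin.sum_univ_two]

lemma Tg_comp (x g : SL2) (P : MvPolynomial (Fin 2) ℂ) :
    Tg (x*g) P = Tg x (Tg g P) := by
  have : Tg (x*g) = (Tg x).comp (Tg g) := by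
    apply MvPolynomial.algHom_ext
    intro i
    obtain ⟨h1, h2, h3, h4⟩ := mul_entries x g
    fin_cases i <;>
      simp [Tg, h1, h2, h3, h4, C_mul, C_add] <;> ring
  rw [this]; rfl

lemma mu_apply0 (n m : ℕ) : mu n m 0 = m := by
  simp [mu, Finsupp.single_apply]

lemma Tg_apply_basis (n k : ℕ) (hk : k ≤ n) (g : SL2) :
    Tg g (X 0 ^ k * X 1 ^ (n-k))
      = ∑ m ∈ Finset.range (n+1), monomial (mu n m) (rhoFun n g m k) := by
  have hrep : Tg g (X 0 ^ k * X 1 ^ (n-k))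
      = ∑ p ∈ Finset.range (k+1), ∑ q ∈ Finset.range (n-k+1),
          monomial (mu n (p+q))
            (ea g ^ p * ec g ^ (k-p) * (k.choose p : ℂ) *
              (eb g ^ q * ed g ^ ((n-k)-q) * ((n-k).choose q : ℂ))) := by
    rw [Tg, _root_.map_mul, map_pow, map_pow, aeval_X, aeval_X]
    simp only [Matrix.cons_val_zero, Matrix.cons_val_one, Matrix.head_cons]
    rw [expand_pow, expand_pow, Finset.sum_mul_sum]
    refine Finset.sum_congr rfl fun p hp => Finset.sum_congr rfl fun q hq => ?_
    rw [Finset.mem_range] at hp hq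
    have e : (Finsupp.single (0:Fin 2) p + Finsupp.single 1 (k-p))
        + (Finsupp.single 0 q + Finsupp.single 1 ((n-k)-q)) = mu n (p+q) := by
      rw [mu, show n - (p+q) = (k-p) + ((n-k)-q) by omega, Finsupp.single_add,
        Finsupp.single_add]
      abel
    rw [monomial_mul, e]
  ext u
  rw [MvPolynomial.coeff_sum]
  simp only [MvPolynomial.coeff_monomial]
  by_cases hex : ∃ m, m ≤ n ∧ u = mu n m
  · obtain ⟨m, hm, rfl⟩ := hex
    rw [Finset.sum_eq_single m]
    · rw [if_pos rfl, rhoFun_Tg]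
    · intro m' hm' hne
      refine if_neg fun hc => hne ?_
      have := congrArg (fun f => f 0) hc
      simpa [mu_apply0] using this
    · intro habs
      exact absurd (Finset.mem_range.2 (by omega)) habs
  · have h1 : ∀ m ∈ Finset.range (n+1), (if mu n m = u then rhoFun n g m k else 0) = 0 := by
      intro m hm
      rw [Finset.mem_range] at hm
      exact if_neg fun hc => hex ⟨m, by omega, hc.symm⟩
    rw [Finset.sum_congr rfl h1, Finset.sum_const_zero, hrep, MvPolynomial.coeff_sum]
    refine Finset.sum_eq_zero fun p hp => ?_
    rw [MvPolynomial.coeff_sum]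
    refine Finset.sum_eq_zero fun q hq => ?_
    rw [Finset.mem_range] at hp hq
    rw [MvPolynomial.coeff_monomial]
    exact if_neg fun hc => hex ⟨p+q, by omega, hc.symm⟩

lemma monomial_mu_eq (n m : ℕ) (c : ℂ) :
    monomial (mu n m) c = C c * (X 0 ^ m * X 1 ^ (n-m) : MvPolynomial (Fin 2) ℂ) := by
  rw [X_pow_eq_monomial, X_pow_eq_monomial, monomial_mul, C_mul_monomial]
  simp [mu]

lemma rhoMat_mul (n : ℕ) (x g : SL2) :
    rhoMat n (x*g) = rhoMat n x * rhoMat n g := by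
  ext l k
  rw [Matrix.mul_apply]
  show rhoFun n (x*g) l k = _
  have hk : (k : ℕ) ≤ n := Nat.lt_succ_iff.1 k.2
  rw [rhoFun_Tg, Tg_comp, Tg_apply_basis n k hk g, map_sum, MvPolynomial.coeff_sum]
  have hterm : ∀ m ∈ Finset.range (n+1),
      coeff (mu n (l:ℕ)) (Tg x (monomial (mu n m) (rhoFun n g m k)))
        = rhoFun n x l m * rhoFun n g m k := by
    intro m hm
    rw [monomial_mu_eq, _root_.map_mul]
    have hC : Tg x (C (rhoFun n g m k)) = C (rhoFun n g m k) := by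
      simp [Tg]
    rw [hC, MvPolynomial.coeff_C_mul, rhoFun_Tg n l m x]
    ring
  rw [Finset.sum_congr rfl hterm]
  have := Fin.sum_univ_eq_sum_range (fun m => rhoFun n x l m * rhoFun n g m k) (n+1)
  rw [← this]
  refine Finset.sum_congr rfl fun j _ => ?_
  simp [rhoMat]
lemma mulVec_fun_mem (n : ℕ) (l : Fin (n+1)) (v : Fin (n+1) → ℂ) :
    (fun x : SL2 => (rhoMat n x).mulVec v l) ∈ S := by
  have hrep : (fun x : SL2 => (rhoMat n x).mulVec v l)
      = ∑ k : Fin (n+1), v k • (fun x => cf n (l:ℕ) (k:ℕ) x) := by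
    funext x
    rw [Finset.sum_apply]
    simp only [Matrix.mulVec, dotProduct, rhoMat, Matrix.of_apply, Pi.smul_apply,
      smul_eq_mul]
    refine Finset.sum_congr rfl fun k _ => ?_
    rw [rhoFun_eq n l k (Nat.lt_succ_iff.1 l.2) (Nat.lt_succ_iff.1 k.2)]
    ring
  rw [hrep]
  exact Submodule.sum_mem S fun k _ => Submodule.smul_mem S _
    (cf_mem_S (Nat.lt_succ_iff.1 l.2) (Nat.lt_succ_iff.1 k.2))

def gammaL (n : ℕ) (l : Fin (n+1)) : (Fin (n+1) → ℂ) →ₗ[ℂ] (SL2 → ℂ) where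
  toFun v := fun x => (rhoMat n x).mulVec v l
  map_add' v w := by funext x; simp [Matrix.mulVec_add]
  map_smul' c v := by funext x; simp [Matrix.mulVec_smul]

lemma gammaL_mem (n : ℕ) (l : Fin (n+1)) : gammaL n l ∈ HomG n := by
  constructor
  · intro v
    exact S_le_Reg (mulVec_fun_mem n l v)
  · intro g v x
    show (rhoMat n x).mulVec ((rhoMat n g).mulVec v) l = (rhoMat n (x*g)).mulVec v l
    rw [Matrix.mulVec_mulVec, ← rhoMat_mul]

lemma homg_decomp {n : ℕ} (γ : (Fin (n+1) → ℂ) →ₗ[ℂ] (SL2 → ℂ)) (hγ : γ ∈ HomG n)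
    (v : Fin (n+1) → ℂ) :
    γ v = ∑ l : Fin (n+1), γ (Pi.single l 1) 1 • (fun x => (rhoMat n x).mulVec v l) := by
  funext x
  have h1 : γ v x = γ ((rhoMat n x).mulVec v) 1 := by
    have := hγ.2 x v 1
    rw [one_mul] at this
    exact this.symm
  have h2 : (rhoMat n x).mulVec v = ∑ l : Fin (n+1), (rhoMat n x).mulVec v l • (Pi.single l 1 : Fin (n+1) → ℂ) := by
    funext j
    rw [Finset.sum_apply]
    simp [Pi.single_apply]
  rw [h1, h2, map_sum, Finset.sum_apply, Finset.sum_apply]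
  refine Finset.sum_congr rfl fun l _ => ?_
  rw [_root_.map_smul]
  simp [mul_comm]

lemma lift_mem (n : ℕ) (z : ↥(HomG n) ⊗[ℂ] (Fin (n+1) → ℂ)) :
    TensorProduct.lift (HomG n).subtype z ∈ S := by
  induction z using TensorProduct.induction_on with
  | zero => simp only [map_zero]; exact S.zero_mem
  | tmul γ v =>
    rw [TensorProduct.lift.tmul]
    show (γ : (Fin (n+1) → ℂ) →ₗ[ℂ] (SL2 → ℂ)) v ∈ S
    rw [homg_decomp γ γ.2 v]
    exact Submodule.sum_mem S fun l _ =>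
      Submodule.smul_mem S _ (mulVec_fun_mem n l v)
  | add z w hz hw =>
    rw [map_add]
    exact S.add_mem hz hw

lemma Phi_of (n : ℕ) (z : ↥(HomG n) ⊗[ℂ] (Fin (n+1) → ℂ)) :
    Phi (DirectSum.of _ n z) = TensorProduct.lift (HomG n).subtype z := by
  unfold Phi
  rw [← DirectSum.lof_eq_of ℂ ℕ (fun m => (↥(HomG m) ⊗[ℂ] (Fin (m+1) → ℂ))) n z,
    DirectSum.toModule_lof]

lemma range_Phi : LinearMap.range Phi = S := by
  apply le_antisymm
  · rintro _ ⟨t, rfl⟩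
    induction t using DirectSum.induction_on with
    | zero => simp only [map_zero]; exact S.zero_mem
    | of n z => rw [Phi_of]; exact lift_mem n z
    | add x y hx hy =>
      rw [map_add]
      exact S.add_mem hx hy
  · rw [S, Submodule.span_le]
    rintro f ⟨n, l, k, hl, hk, rfl⟩
    refine ⟨DirectSum.of _ n
      (⟨gammaL n ⟨l, by omega⟩, gammaL_mem n _⟩ ⊗ₜ Pi.single ⟨k, by omega⟩ 1), ?_⟩
    rw [Phi_of, TensorProduct.lift.tmul]
    show gammaL n ⟨l, by omega⟩ (Pi.single ⟨k, by omega⟩ 1) = fun x => cf n l k x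
    funext x
    show (rhoMat n x).mulVec (Pi.single ⟨k, by omega⟩ 1) ⟨l, by omega⟩ = cf n l k x
    rw [← rhoFun_eq n l k hl hk]
    simp [Matrix.mulVec, dotProduct, Pi.single_apply, rhoMat]
def Dmat (α : ℂ) (h : α ≠ 0) : SL2 :=
  ⟨!![α, 0; 0, α⁻¹], by
    rw [Matrix.det_fin_two_of]
    field_simp
    norm_num⟩

lemma Dmat_entries (α : ℂ) (h : α ≠ 0) :
    ea (Dmat α h) = α ∧ eb (Dmat α h) = 0 ∧ ec (Dmat α h) = 0 ∧ ed (Dmat α h) = α⁻¹ := by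
  refine ⟨?_, ?_, ?_, ?_⟩ <;> simp [Dmat, ea, eb, ec, ed]

lemma prod_entries (α β : ℂ) (hα : α ≠ 0) (hβ : β ≠ 0) (x : SL2) :
    ea (Dmat α hα * x * Dmat β hβ) = α * β * ea x ∧
    eb (Dmat α hα * x * Dmat β hβ) = α * β⁻¹ * eb x ∧
    ec (Dmat α hα * x * Dmat β hβ) = α⁻¹ * β * ec x ∧
    ed (Dmat α hα * x * Dmat β hβ) = α⁻¹ * β⁻¹ * ed x := by
  obtain ⟨d1, d2, d3, d4⟩ := Dmat_entries α hα
  obtain ⟨e1, e2, e3, e4⟩ := Dmat_entries β hβ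
  obtain ⟨f1, f2, f3, f4⟩ := mul_entries (Dmat α hα) x
  obtain ⟨g1, g2, g3, g4⟩ := mul_entries (Dmat α hα * x) (Dmat β hβ)
  rw [g1, g2, g3, g4, f1, f2, f3, f4, d1, d2, d3, d4, e1, e2, e3, e4]
  refine ⟨by ring, by ring, by ring, by ring⟩

lemma scale_term (A B C D α β : ℂ) (p q r s : ℕ) :
    (α*β*A)^p * (α*β⁻¹*B)^q * (α⁻¹*β*C)^r * (α⁻¹*β⁻¹*D)^s
      = α^(p+q) * α⁻¹^(r+s) * β^(p+r) * β⁻¹^(q+s) * (A^p*B^q*C^r*D^s) := by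
  simp only [mul_pow, pow_add]
  ring

lemma cf_scale (n l k : ℕ) (hl : l ≤ n) (hk : k ≤ n) (α β : ℂ) (hα : α ≠ 0) (hβ : β ≠ 0)
    (x : SL2) :
    cf n l k (Dmat α hα * x * Dmat β hβ)
      = α^l * α⁻¹^(n-l) * β^k * β⁻¹^(n-k) * cf n l k x := by
  obtain ⟨p1, p2, p3, p4⟩ := prod_entries α β hα hβ x
  rw [cf, cf, Finset.mul_sum]
  refine Finset.sum_congr rfl fun p hp => ?_
  split_ifs with h
  · rw [p1, p2, p3, p4]
    calc (k.choose p : ℂ) * ((n-k).choose (l-p) : ℂ) * (α*β*ea x)^p * (α*β⁻¹*eb x)^(l-p) *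
          (α⁻¹*β*ec x)^(k-p) * (α⁻¹*β⁻¹*ed x)^((n-k)-(l-p))
        = (k.choose p : ℂ) * ((n-k).choose (l-p) : ℂ) *
            ((α*β*ea x)^p * (α*β⁻¹*eb x)^(l-p) * (α⁻¹*β*ec x)^(k-p) *
              (α⁻¹*β⁻¹*ed x)^((n-k)-(l-p))) := by ring
      _ = _ := by
          rw [scale_term]
          rw [show p + (l-p) = l by omega, show (k-p) + ((n-k)-(l-p)) = n - l by omega,
            show p + (k-p) = k by omega, show (l-p) + ((n-k)-(l-p)) = n - k by omega]
          ring
  · ring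
lemma eval_monomial_E2 (v : Fin 2 → ℂ) (a b : ℕ) (c : ℂ) :
    eval v (monomial (Finsupp.single 0 a + Finsupp.single 1 b) c) = c * v 0 ^ a * v 1 ^ b := by
  rw [eval_monomial]
  rw [Finsupp.prod_add_index' (fun i => pow_zero _) (fun i u w => pow_add _ _ _)]
  have hs : ∀ (i : Fin 2) (e : ℕ),
      ((Finsupp.single i e).prod fun j => HPow.hPow (v j)) = v i ^ e := fun i e =>
    Finsupp.prod_single_index (pow_zero _)
  rw [hs, hs]
  ring

lemma pow_shift (γ : ℂ) (hγ : γ ≠ 0) (l n N : ℕ) (hl : l ≤ n) (hn : n ≤ N) :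
    γ^(2*l+(N-n)+1) = γ^(N+1) * (γ^l * γ⁻¹^(n-l)) := by
  rw [inv_pow]
  have h2 : γ^(N+1) * (γ^l * (γ^(n-l))⁻¹) = γ^(N+1+l) * (γ^(n-l))⁻¹ := by
    rw [← mul_assoc, ← pow_add]
  rw [h2, eq_comm, mul_inv_eq_iff_eq_mul₀ (pow_ne_zero _ hγ), ← pow_add]
  congr 1
  omega

lemma torus_sep (F : Finset ℕ) (N : ℕ) (hN : ∀ n ∈ F, n ≤ N)
    (co : (n : ℕ) → Fin (n+1) → Fin (n+1) → ℂ)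
    (hrel : ∀ x : SL2, ∑ n ∈ F, ∑ k : Fin (n+1), ∑ l : Fin (n+1),
      co n l k * cf n l k x = 0) (W W' : ℕ) (x : SL2) :
    ∑ n ∈ F, ∑ k : Fin (n+1), ∑ l : Fin (n+1),
      (if 2*(l:ℕ) + (N-n) = W ∧ 2*(k:ℕ) + (N-n) = W' then co n l k * cf n l k x else 0)
      = 0 := by
  set PP : MvPolynomial (Fin 2) ℂ := ∑ n ∈ F, ∑ k : Fin (n+1), ∑ l : Fin (n+1),
    monomial (Finsupp.single 0 (2*(l:ℕ)+(N-n)+1) + Finsupp.single 1 (2*(k:ℕ)+(N-n)+1))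
      (co n l k * cf n l k x) with hPPdef
  have hev : ∀ v : Fin 2 → ℂ, eval v PP = 0 := by
    intro v
    rw [hPPdef]
    simp only [map_sum]
    by_cases hv0 : v 0 = 0
    · refine Finset.sum_eq_zero fun n hn => Finset.sum_eq_zero fun k _ =>
        Finset.sum_eq_zero fun l _ => ?_
      rw [eval_monomial_E2, pow_succ, hv0]
      ring
    by_cases hv1 : v 1 = 0
    · refine Finset.sum_eq_zero fun n hn => Finset.sum_eq_zero fun k _ =>
        Finset.sum_eq_zero fun l _ => ?_
      rw [eval_monomial_E2, pow_succ (v 1), hv1]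
      ring
    · have key : ∀ n ∈ F, ∀ (k l : Fin (n+1)),
          eval v (monomial (Finsupp.single (0 : Fin 2) (2*(l:ℕ)+(N-n)+1)
              + Finsupp.single 1 (2*(k:ℕ)+(N-n)+1)) (co n l k * cf n l k x))
            = (v 0)^(N+1) * (v 1)^(N+1) *
              (co n l k * cf n l k (Dmat (v 0) hv0 * x * Dmat (v 1) hv1)) := by
        intro n hn k l
        rw [eval_monomial_E2, cf_scale n l k (Nat.lt_succ_iff.1 l.2) (Nat.lt_succ_iff.1 k.2)
          (v 0) (v 1) hv0 hv1 x]
        rw [pow_shift (v 0) hv0 l n N (Nat.lt_succ_iff.1 l.2) (hN n hn),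
          pow_shift (v 1) hv1 k n N (Nat.lt_succ_iff.1 k.2) (hN n hn)]
        ring
      rw [Finset.sum_congr rfl (fun n hn => Finset.sum_congr rfl fun k _ =>
        Finset.sum_congr rfl fun l _ => key n hn k l)]
      have : ∑ n ∈ F, ∑ k : Fin (n+1), ∑ l : Fin (n+1),
          (v 0)^(N+1) * (v 1)^(N+1) *
            (co n l k * cf n l k (Dmat (v 0) hv0 * x * Dmat (v 1) hv1))
          = (v 0)^(N+1) * (v 1)^(N+1) *
            ∑ n ∈ F, ∑ k : Fin (n+1), ∑ l : Fin (n+1),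
              co n l k * cf n l k (Dmat (v 0) hv0 * x * Dmat (v 1) hv1) := by
        rw [Finset.mul_sum]
        refine Finset.sum_congr rfl fun n _ => ?_
        rw [Finset.mul_sum]
        refine Finset.sum_congr rfl fun k _ => ?_
        rw [Finset.mul_sum]
      rw [this, hrel (Dmat (v 0) hv0 * x * Dmat (v 1) hv1), mul_zero]
  have hPP : PP = 0 := by
    apply MvPolynomial.funext
    intro v
    rw [hev v, map_zero]
  have hco := congrArg
    (MvPolynomial.coeff (Finsupp.single (0 : Fin 2) (W+1) + Finsupp.single 1 (W'+1))) hPP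
  rw [hPPdef] at hco
  simp only [MvPolynomial.coeff_sum, MvPolynomial.coeff_monomial, MvPolynomial.coeff_zero]
    at hco
  refine Eq.trans (Finset.sum_congr rfl fun n hn => Finset.sum_congr rfl fun k _ =>
    Finset.sum_congr rfl fun l _ => ?_) hco
  refine if_congr ?_ rfl rfl
  rw [fin2_single_eq_iff]
  omega
lemma van2 (n l k : ℕ) (hl : l ≤ n) (hk : k ≤ n) :
    ∑ p ∈ Finset.range (n+1),
      (if p ≤ l ∧ p ≤ k ∧ l - p ≤ n - k then
        ((k.choose p : ℂ) * (((n-k).choose (l-p) : ℕ) : ℂ)) else 0)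
      = ((n.choose l : ℕ) : ℂ) := by
  rw [← sum_extend _ l n (by omega) (fun p' hp' => by rw [if_neg]; omega)]
  have h1 : ∀ p' ∈ Finset.range (l+1),
      (if p' ≤ l ∧ p' ≤ k ∧ l - p' ≤ n - k then
        ((k.choose p' : ℂ) * (((n-k).choose (l-p') : ℕ) : ℂ)) else 0)
      = ((k.choose p' * (n-k).choose (l-p') : ℕ) : ℂ) := by
    intro p' hp'
    rw [Finset.mem_range] at hp'
    split_ifs with h
    · push_cast; ring
    · rcases Nat.lt_or_ge k p' with hk' | hk'
      · simp [Nat.choose_eq_zero_of_lt hk']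
      · have : n - k < l - p' := by omega
        simp [Nat.choose_eq_zero_of_lt this]
  rw [Finset.sum_congr rfl h1, ← Nat.cast_sum]
  congr 1
  have hv := Nat.add_choose_eq k (n-k) l
  rw [show k + (n-k) = n by omega] at hv
  rw [hv, Finset.Nat.sum_antidiagonal_eq_sum_range_succ_mk]

def xz (ζ : ℂ) (h : ζ^2 - 1 ≠ 0) : SL2 :=
  ⟨!![ζ/(ζ^2-1), 1/(ζ^2-1); 1, ζ], by
    rw [Matrix.det_fin_two_of]
    field_simp⟩

lemma xz_entries (ζ : ℂ) (h : ζ^2 - 1 ≠ 0) :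
    ea (xz ζ h) = ζ/(ζ^2-1) ∧ eb (xz ζ h) = 1/(ζ^2-1) ∧
    ec (xz ζ h) = 1 ∧ ed (xz ζ h) = ζ := by
  refine ⟨?_, ?_, ?_, ?_⟩ <;> simp [xz, ea, eb, ec, ed]

/-- the one-variable polynomial incarnation of a matrix coefficient along the `xz` curve -/
def ip (n l k : ℕ) : Polynomial ℂ :=
  ∑ p ∈ Finset.range (n+1),
    if p ≤ l ∧ p ≤ k ∧ l - p ≤ n - k then
      Polynomial.C ((k.choose p : ℂ) * (((n-k).choose (l-p) : ℕ) : ℂ)) *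
        Polynomial.X^(p + ((n-k)-(l-p)))
    else 0

lemma ip_eval (n l k : ℕ) (hl : l ≤ n) (hk : k ≤ n) (ζ : ℂ) (hζ : ζ^2 - 1 ≠ 0) :
    (ip n l k).eval ζ = (ζ^2-1)^l * cf n l k (xz ζ hζ) := by
  obtain ⟨e1, e2, e3, e4⟩ := xz_entries ζ hζ
  rw [ip, Polynomial.eval_finset_sum, cf, Finset.mul_sum]
  refine Finset.sum_congr rfl fun p hp => ?_
  rw [Finset.mem_range] at hp
  split_ifs with h
  · rw [Polynomial.eval_mul, Polynomial.eval_pow, Polynomial.eval_C, Polynomial.eval_X]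
    rw [e1, e2, e3, e4]
    rw [show (ζ^2-1)^l = (ζ^2-1)^p * (ζ^2-1)^(l-p) by rw [← pow_add]; congr 1; omega]
    rw [div_pow, div_pow, one_pow, one_pow, pow_add]
    field_simp
  · simp

lemma ip_eval_one (n l k : ℕ) (hl : l ≤ n) (hk : k ≤ n) :
    (ip n l k).eval 1 = ((n.choose l : ℕ) : ℂ) := by
  rw [ip, Polynomial.eval_finset_sum, ← van2 n l k hl hk]
  refine Finset.sum_congr rfl fun p hp => ?_
  split_ifs with h
  · simp
  · simp
lemma extract (F : Finset ℕ) (N : ℕ) (hN : ∀ n ∈ F, n ≤ N)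
    (co : (n : ℕ) → Fin (n+1) → Fin (n+1) → ℂ)
    (hrel : ∀ x : SL2, ∑ n ∈ F, ∑ k : Fin (n+1), ∑ l : Fin (n+1),
      co n l k * cf n l k x = 0)
    (n0 : ℕ) (hn0 : n0 ∈ F) (l0 k0 : Fin (n0+1))
    (IH : ∀ n' ∈ F, n0 < n' → ∀ (l k : Fin (n'+1)), co n' l k = 0) :
    co n0 l0 k0 = 0 := by
  have hn0N : n0 ≤ N := hN n0 hn0
  set W := 2*(l0:ℕ) + (N - n0) with hW
  set W' := 2*(k0:ℕ) + (N - n0) with hW'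
  set PZ : Polynomial ℂ := ∑ n ∈ F, ∑ k : Fin (n+1), ∑ l : Fin (n+1),
    (if 2*(l:ℕ) + (N-n) = W ∧ 2*(k:ℕ) + (N-n) = W' then
      Polynomial.C (co n l k) * (Polynomial.X^2 - 1)^((l0:ℕ) - (l:ℕ)) * ip n (l:ℕ) (k:ℕ)
    else 0) with hPZ
  have hz : ∀ ζ : ℂ, ζ^2 - 1 ≠ 0 → PZ.eval ζ = 0 := by
    intro ζ hζ
    have h1 : PZ.eval ζ = ∑ n ∈ F, ∑ k : Fin (n+1), ∑ l : Fin (n+1),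
        (ζ^2-1)^(l0:ℕ) * (if 2*(l:ℕ) + (N-n) = W ∧ 2*(k:ℕ) + (N-n) = W' then
          co n l k * cf n (l:ℕ) (k:ℕ) (xz ζ hζ) else 0) := by
      rw [hPZ]
      simp only [Polynomial.eval_finset_sum]
      refine Finset.sum_congr rfl fun n hn => Finset.sum_congr rfl fun k _ =>
        Finset.sum_congr rfl fun l _ => ?_
      split_ifs with hcond
      · rw [Polynomial.eval_mul, Polynomial.eval_mul, Polynomial.eval_C,
          Polynomial.eval_pow, Polynomial.eval_sub, Polynomial.eval_pow,
          Polynomial.eval_one, Polynomial.eval_X]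
        by_cases hnn : n0 < n
        · rw [IH n hn hnn l k]
          ring
        · have hlle : (l:ℕ) ≤ (l0:ℕ) := by
            have h1 := hcond.1
            have h2 := hN n hn
            omega
          rw [ip_eval n l k (Nat.lt_succ_iff.1 l.2) (Nat.lt_succ_iff.1 k.2) ζ hζ]
          rw [show ((ζ^2-1):ℂ)^((l0:ℕ)) = (ζ^2-1)^((l0:ℕ)-(l:ℕ)) * (ζ^2-1)^(l:ℕ) by
            rw [← pow_add]; congr 1; omega]
          ring
      · rw [Polynomial.eval_zero, mul_zero]
    have h2 : PZ.eval ζ = (ζ^2-1)^(l0:ℕ) * (∑ n ∈ F, ∑ k : Fin (n+1), ∑ l : Fin (n+1),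
        (if 2*(l:ℕ) + (N-n) = W ∧ 2*(k:ℕ) + (N-n) = W' then
          co n l k * cf n (l:ℕ) (k:ℕ) (xz ζ hζ) else 0)) := by
      rw [h1, Finset.mul_sum]
      refine Finset.sum_congr rfl fun n _ => ?_
      rw [Finset.mul_sum]
      refine Finset.sum_congr rfl fun k _ => ?_
      rw [Finset.mul_sum]
    rw [h2, torus_sep F N hN co hrel W W' (xz ζ hζ), mul_zero]
  have hfin : ({ζ : ℂ | ζ^2 - 1 = 0}).Finite := by
    refine Set.Finite.subset ((Set.finite_singleton (-1:ℂ)).insert 1) ?_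
    intro ζ hζ
    simp only [Set.mem_setOf_eq] at hζ
    have hfac : (ζ - 1) * (ζ + 1) = 0 := by linear_combination hζ
    simp only [Set.mem_insert_iff, Set.mem_singleton_iff]
    rcases mul_eq_zero.1 hfac with h | h
    · exact Or.inl (sub_eq_zero.1 h)
    · exact Or.inr (eq_neg_of_add_eq_zero_left h)
  have hinf : {ζ : ℂ | PZ.IsRoot ζ}.Infinite := by
    refine Set.Infinite.mono ?_ ((Set.infinite_univ).diff hfin)
    intro ζ hζ
    exact hz ζ (fun h0 => hζ.2 h0)
  have hPZ0 : PZ = 0 := Polynomial.eq_zero_of_infinite_isRoot PZ hinf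
  have he1 : PZ.eval 1 = 0 := by rw [hPZ0, Polynomial.eval_zero]
  have hval : PZ.eval 1 = co n0 l0 k0 * ((n0.choose (l0:ℕ) : ℕ) : ℂ) := by
    rw [hPZ]
    simp only [Polynomial.eval_finset_sum]
    rw [Finset.sum_eq_single n0]
    · rw [Finset.sum_eq_single k0]
      · rw [Finset.sum_eq_single l0]
        · rw [if_pos ⟨rfl, rfl⟩, Polynomial.eval_mul, Polynomial.eval_mul,
            Polynomial.eval_C, Polynomial.eval_pow, Polynomial.eval_sub,
            Polynomial.eval_pow, Polynomial.eval_one, Polynomial.eval_X,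
            ip_eval_one n0 l0 k0 (Nat.lt_succ_iff.1 l0.2) (Nat.lt_succ_iff.1 k0.2)]
          norm_num [Nat.sub_self]
        · intro l _ hne
          rw [if_neg (fun hcond => hne (Fin.ext (by omega)))]
          exact Polynomial.eval_zero
        · intro habs
          exact absurd (Finset.mem_univ l0) habs
      · intro k _ hne
        refine Finset.sum_eq_zero fun l _ => ?_
        rw [if_neg (fun hcond => hne (Fin.ext (by omega)))]
        exact Polynomial.eval_zero
      · intro habs
        exact absurd (Finset.mem_univ k0) habs
    · intro n hn hne
      refine Finset.sum_eq_zero fun k _ => Finset.sum_eq_zero fun l _ => ?_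
      split_ifs with hcond
      · rcases Nat.lt_or_ge n0 n with hlt | hge
        · rw [IH n hn hlt l k]
          simp
        · have hlf : (l:ℕ) < (l0:ℕ) := by
            have h2 := hN n hn
            have h3 := hcond.1
            have : n < n0 := by omega
            omega
          rw [Polynomial.eval_mul, Polynomial.eval_mul, Polynomial.eval_pow,
            Polynomial.eval_sub, Polynomial.eval_pow, Polynomial.eval_one,
            Polynomial.eval_X]
          rw [show ((1:ℂ)^2 - 1) = 0 by norm_num, zero_pow (by omega : (l0:ℕ) - (l:ℕ) ≠ 0)]
          ring
      · exact Polynomial.eval_zero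
    · intro habs
      exact absurd hn0 habs
  have hchoose : ((n0.choose (l0:ℕ) : ℕ) : ℂ) ≠ 0 :=
    Nat.cast_ne_zero.2 (Nat.choose_pos (Nat.lt_succ_iff.1 l0.2)).ne'
  have := he1 ▸ hval
  exact (mul_eq_zero.1 this.symm).resolve_right hchoose

lemma indep (F : Finset ℕ) (co : (n : ℕ) → Fin (n+1) → Fin (n+1) → ℂ)
    (hrel : ∀ x : SL2, ∑ n ∈ F, ∑ k : Fin (n+1), ∑ l : Fin (n+1),
      co n l k * cf n l k x = 0) :
    ∀ n ∈ F, ∀ (l k : Fin (n+1)), co n l k = 0 := by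
  set N := F.sup id with hNdef
  have hN : ∀ n ∈ F, n ≤ N := fun n hn => Finset.le_sup (f := id) hn
  have main : ∀ d n, n ∈ F → N - n = d → ∀ (l k : Fin (n+1)), co n l k = 0 := by
    intro d
    induction d using Nat.strong_induction_on with
    | _ d IHd =>
      intro n hn hd l k
      refine extract F N hN co hrel n hn l k ?_
      intro n' hn' hlt l' k'
      exact IHd (N - n') (by have := hN n' hn'; omega) n' hn' rfl l' k'
  exact fun n hn l k => main (N - n) n hn rfl l k
lemma mulVec_single_eq (n : ℕ) (x : SL2) (l k : Fin (n+1)) :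
    (rhoMat n x).mulVec (Pi.single k 1) l = cf n (l:ℕ) (k:ℕ) x := by
  rw [← rhoFun_eq n l k (Nat.lt_succ_iff.1 l.2) (Nat.lt_succ_iff.1 k.2)]
  simp [Matrix.mulVec, dotProduct, Pi.single_apply, rhoMat]

lemma tensor_decomp (n : ℕ) (z : ↥(HomG n) ⊗[ℂ] (Fin (n+1) → ℂ)) :
    ∃ γ : Fin (n+1) → ↥(HomG n),
      z = ∑ k : Fin (n+1), (γ k) ⊗ₜ[ℂ] (Pi.single k 1 : Fin (n+1) → ℂ) := by
  induction z using TensorProduct.induction_on with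
  | zero =>
    refine ⟨0, ?_⟩
    simp [TensorProduct.zero_tmul]
  | tmul γ v =>
    refine ⟨fun k => v k • γ, ?_⟩
    have h1 : ∀ k : Fin (n+1), (v k • γ) ⊗ₜ[ℂ] (Pi.single k 1 : Fin (n+1) → ℂ)
        = γ ⊗ₜ[ℂ] (Pi.single k (v k) : Fin (n+1) → ℂ) := by
      intro k
      rw [TensorProduct.smul_tmul]
      congr 1
      funext j
      by_cases h : j = k <;> simp [h, Pi.single_apply]
    rw [Finset.sum_congr rfl (fun k _ => h1 k), ← TensorProduct.tmul_sum]
    congr 1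
    funext j
    rw [Finset.sum_apply]
    simp [Pi.single_apply]
  | add z w hz hw =>
    obtain ⟨γ1, hh1⟩ := hz
    obtain ⟨γ2, hh2⟩ := hw
    refine ⟨γ1 + γ2, ?_⟩
    rw [hh1, hh2, ← Finset.sum_add_distrib]
    refine Finset.sum_congr rfl fun k _ => ?_
    rw [Pi.add_apply, TensorProduct.add_tmul]

set_option maxHeartbeats 1000000
set_option synthInstance.maxHeartbeats 1000000

lemma Phi_eval (F : Finset ℕ) (t : ⨁ n : ℕ, (↥(HomG n) ⊗[ℂ] (Fin (n+1) → ℂ)))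
    (hsupp : ∀ n, n ∉ F → t n = 0)
    (γ : (n : ℕ) → Fin (n+1) → ↥(HomG n))
    (hγ : ∀ n, t n = ∑ k : Fin (n+1), γ n k ⊗ₜ[ℂ] (Pi.single k 1 : Fin (n+1) → ℂ))
    (x : SL2) :
    Phi t x = ∑ n ∈ F, ∑ k : Fin (n+1), ∑ l : Fin (n+1),
      (γ n k).1 (Pi.single l 1) 1 * cf n (l:ℕ) (k:ℕ) x := by
  classical
  have hterm : ∀ (n : ℕ) (k : Fin (n+1)),
      ((γ n k : ↥(HomG n)) : (Fin (n+1) → ℂ) →ₗ[ℂ] (SL2 → ℂ)) (Pi.single k 1) x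
        = ∑ l : Fin (n+1), (γ n k).1 (Pi.single l 1) 1 * cf n (l:ℕ) (k:ℕ) x := by
    intro n k
    rw [homg_decomp _ (γ n k).2 (Pi.single k 1)]
    rw [Finset.sum_apply]
    refine Finset.sum_congr rfl fun l _ => ?_
    rw [Pi.smul_apply, smul_eq_mul, mulVec_single_eq]
  have hPhi : Phi t = ∑ n ∈ F, TensorProduct.lift (HomG n).subtype (t n) := by
    conv_lhs => rw [← DirectSum.sum_support_of t]
    rw [map_sum]
    rw [Finset.sum_congr rfl (fun n _ => Phi_of n (t n))]
    have hsub : t.support ⊆ F := fun n hn => by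
      by_contra hc
      exact (DFinsupp.mem_support_iff.1 hn) (hsupp n hc)
    refine Finset.sum_subset hsub fun n _ hn => ?_
    rw [DFinsupp.notMem_support_iff.1 hn, map_zero]
  rw [hPhi, Finset.sum_apply]
  refine Finset.sum_congr rfl fun n _ => ?_
  rw [hγ n, map_sum, Finset.sum_apply]
  refine Finset.sum_congr rfl fun k _ => ?_
  rw [TensorProduct.lift.tmul]
  exact hterm n k

lemma Phi_inj : Function.Injective ⇑Phi := by
  classical
  intro t1 t2 h
  obtain ⟨γ1, hγ1⟩ := Classical.axiomOfChoice (fun n => tensor_decomp n (t1 n))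
  obtain ⟨γ2, hγ2⟩ := Classical.axiomOfChoice (fun n => tensor_decomp n (t2 n))
  set F : Finset ℕ := t1.support ∪ t2.support with hF
  have hrel : ∀ x : SL2, ∑ n ∈ F, ∑ k : Fin (n+1), ∑ l : Fin (n+1),
      ((γ1 n k).1 (Pi.single l 1) 1 - (γ2 n k).1 (Pi.single l 1) 1) * cf n (l:ℕ) (k:ℕ) x
        = 0 := by
    intro x
    have hs1 : ∀ n, n ∉ F → t1 n = 0 := fun n hn =>
      DFinsupp.notMem_support_iff.1 (fun hmem => hn (Finset.mem_union_left _ hmem))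
    have hs2 : ∀ n, n ∉ F → t2 n = 0 := fun n hn =>
      DFinsupp.notMem_support_iff.1 (fun hmem => hn (Finset.mem_union_right _ hmem))
    have e1 := Phi_eval F t1 hs1 γ1 hγ1 x
    have e2 := Phi_eval F t2 hs2 γ2 hγ2 x
    have e3 : Phi t1 x = Phi t2 x := by rw [h]
    have e4 : ∑ n ∈ F, ∑ k : Fin (n+1), ∑ l : Fin (n+1),
        ((γ1 n k).1 (Pi.single l 1) 1 - (γ2 n k).1 (Pi.single l 1) 1) * cf n (l:ℕ) (k:ℕ) x
        = (∑ n ∈ F, ∑ k : Fin (n+1), ∑ l : Fin (n+1),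
            (γ1 n k).1 (Pi.single l 1) 1 * cf n (l:ℕ) (k:ℕ) x)
          - ∑ n ∈ F, ∑ k : Fin (n+1), ∑ l : Fin (n+1),
            (γ2 n k).1 (Pi.single l 1) 1 * cf n (l:ℕ) (k:ℕ) x := by
      rw [← Finset.sum_sub_distrib]
      refine Finset.sum_congr rfl fun n _ => ?_
      rw [← Finset.sum_sub_distrib]
      refine Finset.sum_congr rfl fun k _ => ?_
      rw [← Finset.sum_sub_distrib]
      refine Finset.sum_congr rfl fun l _ => ?_
      ring
    rw [e4, ← e1, ← e2, e3, sub_self]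
  have hzero := indep F
    (fun n l k => (γ1 n k).1 (Pi.single l 1) 1 - (γ2 n k).1 (Pi.single l 1) 1) hrel
  have hγeq : ∀ n ∈ F, ∀ k : Fin (n+1), γ1 n k = γ2 n k := by
    intro n hn k
    apply Subtype.ext
    apply LinearMap.ext
    intro v
    rw [homg_decomp _ (γ1 n k).2 v, homg_decomp _ (γ2 n k).2 v]
    refine Finset.sum_congr rfl fun l _ => ?_
    have heq : (γ1 n k).1 (Pi.single l 1) 1 = (γ2 n k).1 (Pi.single l 1) 1 :=
      sub_eq_zero.1 (hzero n hn l k)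
    rw [heq]
  refine DFinsupp.ext fun n => ?_
  by_cases hn : n ∈ F
  · rw [hγ1 n, hγ2 n]
    exact Finset.sum_congr rfl fun k _ => by rw [hγeq n hn k]
  · rw [hF, Finset.mem_union, not_or] at hn
    rw [DFinsupp.notMem_support_iff.1 hn.1, DFinsupp.notMem_support_iff.1 hn.2]
lemma S_eq_Reg : S = Reg := le_antisymm S_le_Reg Reg_le_S

end
end SL2Aux

/-- `Φ` is a linear bijection onto ℂ[SL(2,ℂ)]: it is injective and its range is
exactly the space of regular functions. -/
theorem phi_bijective_onto_regular :
    Function.Injective ⇑Phi ∧ Set.range ⇑Phi = {f : SL2 → ℂ | IsRegularFn f} := by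
  constructor
  · exact SL2Aux.Phi_inj
  · have h2 : LinearMap.range Phi = SL2Aux.Reg := by
      rw [SL2Aux.range_Phi, SL2Aux.S_eq_Reg]
    calc Set.range ⇑Phi = ↑(LinearMap.range Phi) := by rw [LinearMap.coe_range]
      _ = ↑SL2Aux.Reg := by rw [h2]
      _ = {f : SL2 → ℂ | IsRegularFn f} := rfl

end
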